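/- Let i be an index with a_i > b_i, and let l_i = max{ l ∈ ℕ : t^{ω_i + l g_1}* ∈ (0 :_{G(m)} 𝓜^r) }. Then t^{ω_i + l g_1}* ∈ (0 :_{G(m)} 𝓜^r) for every l = 0, 1, …, l_i. -/

import Mathlib

/-!
Common setup: the numerical semigroup ring `R = k[[t^S]]`, its maximal ideal `m`,
the associated graded ring `G(m)` (realized as the Rees algebra `R[mt]` modulo
the extension of `m`, the standard presentation of `⊕_{h≥0} m^h/m^{h+1}`),
the homogeneous maximal ideal `𝓜`, the reduction number `r`, initial forms
`t^s*`, Apery sets, the invariants `a_i`, `b_i`, `l_i`, the order function,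
the partial order `≤_M`, symmetry, `M`-purity, Buchsbaumness and
Cohen-Macaulayness (via their characterizations `(0:𝓜) = (0:𝓜^r)` and
`(0:𝓜^r) = 0` valid in this one-dimensional graded setting).
-/

set_option maxHeartbeats 1000000
set_option synthInstance.maxHeartbeats 1000000

open scoped Pointwise
open Polynomial

noncomputable section

namespace NumSgrp

/-- The numerical semigroup `S` generated by `g 0 < g 1 < ⋯ < g n`. -/
def S {n : ℕ} (g : Fin (n + 1) → ℕ) : AddSubmonoid ℕ := AddSubmonoid.closure (Set.range g)

/-- `setM g h` is the `h`-fold sumset `M + ⋯ + M` of the maximal ideal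
`M = S \ {0}`; by convention `setM g 0 = S` (corresponding to `m^0 = R`). -/
def setM {n : ℕ} (g : Fin (n + 1) → ℕ) : ℕ → Set ℕ
  | 0 => (S g : Set ℕ)
  | h+1 => ({u : ℕ | u ∈ S g ∧ u ≠ 0} + setM g h : Set ℕ)

/-- `ordS g s` = ord(s) = max { h | s ∈ hM }. -/
def ordS {n : ℕ} (g : Fin (n + 1) → ℕ) (s : ℕ) : ℕ := sSup {h | s ∈ setM g h}

/-- `ap g i` = ω_i, the least element of `S` congruent to `i` modulo `g 0`. -/
def ap {n : ℕ} (g : Fin (n + 1) → ℕ) (i : ℕ) : ℕ := sInf {s | s ∈ S g ∧ s % g 0 = i}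

/-- The Apery set `Ap_{g_1}(S) = {ω_0, …, ω_{g_1-1}}`. -/
def apSet {n : ℕ} (g : Fin (n + 1) → ℕ) : Set ℕ := {s | ∃ i < g 0, s = ap g i}

/-- The blow-up `S' = ⟨g_1, g_2 - g_1, …, g_n - g_1⟩`. -/
def S' {n : ℕ} (g : Fin (n + 1) → ℕ) : AddSubmonoid ℕ :=
  AddSubmonoid.closure (insert (g 0) (Set.range fun i => g i - g 0))

/-- `ap' g i` = ω'_i, the least element of `S'` congruent to `i` modulo `g 0`. -/
def ap' {n : ℕ} (g : Fin (n + 1) → ℕ) (i : ℕ) : ℕ := sInf {s | s ∈ S' g ∧ s % g 0 = i}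

/-- The Apery set `Ap_{g_1}(S') = {ω'_0, …, ω'_{g_1-1}}`. -/
def apSet' {n : ℕ} (g : Fin (n + 1) → ℕ) : Set ℕ := {s | ∃ i < g 0, s = ap' g i}

/-- `aa g i` = a_i, the unique integer with ω_i = ω'_i + a_i g_1. -/
def aa {n : ℕ} (g : Fin (n + 1) → ℕ) (i : ℕ) : ℕ := (ap g i - ap' g i) / g 0

/-- `bb g i` = b_i = ord(ω_i). -/
def bb {n : ℕ} (g : Fin (n + 1) → ℕ) (i : ℕ) : ℕ := ordS g (ap g i)

/-- The partial order `u ≤_M u'`: there is `s ∈ S` with `u + s = u'` and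
`ord u + ord s = ord u'`. -/
def leM {n : ℕ} (g : Fin (n + 1) → ℕ) (u v : ℕ) : Prop :=
  ∃ s ∈ S g, u + s = v ∧ ordS g u + ordS g s = ordS g v

/-- `maxAp_M(S)`: the maximal elements of the Apery set w.r.t. `≤_M`. -/
def maxAp {n : ℕ} (g : Fin (n + 1) → ℕ) : Set ℕ :=
  {u | u ∈ apSet g ∧ ∀ v ∈ apSet g, leM g u v → v = u}

/-- `S` is `M`-pure: all elements of `maxAp_M(S)` have the same order. -/
def MPure {n : ℕ} (g : Fin (n + 1) → ℕ) : Prop :=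
  ∀ u ∈ maxAp g, ∀ v ∈ maxAp g, ordS g u = ordS g v

/-- `S` viewed inside `ℤ`. -/
def SZ {n : ℕ} (g : Fin (n + 1) → ℕ) : Set ℤ := {x | ∃ s ∈ S g, (s : ℤ) = x}

/-- The Frobenius number `g(S) = max (ℤ \ S)`. -/
def frob {n : ℕ} (g : Fin (n + 1) → ℕ) : ℤ := sSup {x : ℤ | x ∉ SZ g}

/-- `S` is symmetric: for every `x ∈ ℤ`, `x ∉ S` implies `g(S) - x ∈ S`. -/
def IsSymm {n : ℕ} (g : Fin (n + 1) → ℕ) : Prop :=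
  ∀ x : ℤ, x ∉ SZ g → frob g - x ∈ SZ g

/-- Hypotheses: `g 0 < g 1 < ⋯ < g n` is a minimal system of generators with
gcd 1, so `S` is a numerical semigroup minimally generated by the `g i`. -/
structure MinGen {n : ℕ} (g : Fin (n + 1) → ℕ) : Prop where
  smono : StrictMono g
  minimal : ∀ i, g i ∉ AddSubmonoid.closure (Set.range g \ {g i})
  gcdeq : Finset.univ.gcd g = 1

variable (k : Type*) [Field k] {n : ℕ} (g : Fin (n + 1) → ℕ)

/-- `R = k[[t^S]]`: the subalgebra of `k[[t]]` of power series supported in `S`. -/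
def Rsub : Subalgebra k (PowerSeries k) where
  carrier := {f | ∀ i, PowerSeries.coeff i f ≠ 0 → i ∈ S g}
  zero_mem' := by intro i hi; simp at hi
  one_mem' := by
    intro i hi
    by_cases h : i = 0
    · exact h ▸ (S g).zero_mem
    · rw [PowerSeries.coeff_one, if_neg h] at hi; exact absurd rfl hi
  add_mem' := by
    intro a b ha hb i hi
    rw [map_add] at hi
    by_cases h : PowerSeries.coeff i a ≠ 0
    · exact ha i h
    · push_neg at h
      rw [h, zero_add] at hi
      exact hb i hi
  mul_mem' := by
    intro a b ha hb i hi
    rw [PowerSeries.coeff_mul] at hi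
    obtain ⟨p, hp, hne⟩ := Finset.exists_ne_zero_of_sum_ne_zero hi
    have h1 := ha p.1 (left_ne_zero_of_mul hne)
    have h2 := hb p.2 (right_ne_zero_of_mul hne)
    exact (Finset.HasAntidiagonal.mem_antidiagonal.mp hp) ▸ add_mem h1 h2
  algebraMap_mem' := by
    intro r i hi
    by_cases h : i = 0
    · exact h ▸ (S g).zero_mem
    · exfalso
      apply hi
      have : (algebraMap k (PowerSeries k)) r = PowerSeries.C r := rfl
      rw [this, PowerSeries.coeff_C, if_neg h]

open Classical in
/-- `t^s` as an element of `R` (defined to be `0` if `s ∉ S`). -/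
def tR (s : ℕ) : Rsub k g :=
  if h : s ∈ S g then
    ⟨PowerSeries.monomial s 1, by
      intro i hi
      rw [PowerSeries.coeff_monomial] at hi
      split at hi
      · next heq => exact heq ▸ h
      · exact absurd rfl hi⟩
  else 0

/-- `m = (t^{g_1}, …, t^{g_n})`, the maximal ideal of `R`. -/
def mI : Ideal (Rsub k g) := Ideal.span (Set.range fun i => tR k g (g i))

lemma tR_mul {s u : ℕ} (hs : s ∈ S g) (hu : u ∈ S g) :
    tR k g (s + u) = tR k g s * tR k g u := by
  simp only [tR, dif_pos hs, dif_pos hu, dif_pos (add_mem hs hu)]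
  apply Subtype.ext
  simp only [MulMemClass.coe_mul]
  show (PowerSeries.monomial (s + u)) (1 : k) =
    (PowerSeries.monomial s) 1 * (PowerSeries.monomial u) 1
  rw [← PowerSeries.X_pow_eq, ← PowerSeries.X_pow_eq, ← PowerSeries.X_pow_eq, pow_add]

lemma setM_subset : ∀ h : ℕ, setM g h ⊆ (S g : Set ℕ) := by
  intro h
  induction h with
  | zero => exact fun s hs => hs
  | succ h ih =>
    rintro s ⟨u, hu, v, hv, huv⟩
    have : u + v = s := huv
    exact this ▸ add_mem hu.1 (ih hv)

lemma le_of_mem_setM : ∀ h : ℕ, ∀ s ∈ setM g h, h ≤ s := by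
  intro h
  induction h with
  | zero => exact fun s _ => Nat.zero_le s
  | succ h ih =>
    rintro s ⟨u, hu, v, hv, huv⟩
    have hsum : u + v = s := huv
    have h1 : 1 ≤ u := Nat.one_le_iff_ne_zero.mpr hu.2
    have h2 := ih v hv
    omega

lemma tR_mem_mI {u : ℕ} (hu : u ∈ S g) (hne : u ≠ 0) : tR k g u ∈ mI k g := by
  have key : ∀ (x : ℕ) (_ : x ∈ S g), x = 0 ∨ tR k g x ∈ mI k g := by
    intro x hx
    induction hx using AddSubmonoid.closure_induction with
    | mem y hy =>
      obtain ⟨i, rfl⟩ := hy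
      exact Or.inr (Ideal.subset_span ⟨i, rfl⟩)
    | zero => exact Or.inl rfl
    | add x y hx hy px py =>
      rcases px with rfl | px
      · rcases py with rfl | py
        · exact Or.inl rfl
        · exact Or.inr (by rwa [zero_add])
      · refine Or.inr ?_
        rw [tR_mul k g hx hy]
        exact Ideal.mul_mem_right _ _ px
  rcases key u hu with rfl | h
  · exact absurd rfl hne
  · exact h

lemma tR_mem_pow_of_setM : ∀ h : ℕ, ∀ s ∈ setM g h, tR k g s ∈ (mI k g) ^ h := by
  intro h
  induction h with
  | zero =>
    intro s _
    rw [pow_zero, Ideal.one_eq_top]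
    exact Submodule.mem_top
  | succ h ih =>
    rintro s ⟨u, hu, v, hv, huv⟩
    have hsum : u + v = s := huv
    rw [← hsum, tR_mul k g hu.1 (setM_subset g h hv), pow_succ, mul_comm (tR k g u)]
    exact Ideal.mul_mem_mul (ih v hv) (tR_mem_mI k g hu.1 hu.2)

lemma mem_setM_ordS {s : ℕ} (hs : s ∈ S g) : s ∈ setM g (ordS g s) := by
  have : ordS g s ∈ {h | s ∈ setM g h} :=
    Nat.sSup_mem (⟨0, hs⟩ : Set.Nonempty {h | s ∈ setM g h})
      ⟨s, fun h hh => le_of_mem_setM g h s hh⟩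
  exact this

lemma tR_mem_pow (s : ℕ) : tR k g s ∈ (mI k g) ^ (ordS g s) := by
  by_cases hs : s ∈ S g
  · exact tR_mem_pow_of_setM k g _ s (mem_setM_ordS g hs)
  · rw [tR, dif_neg hs]
    exact zero_mem _

/-- `G(m) = ⊕_{h ≥ 0} m^h/m^{h+1}`, realized as the Rees algebra `R[mt]`
modulo the extension of `m` (the standard presentation of the associated
graded ring of a local ring). -/
abbrev grG : Type _ :=
  (reesAlgebra (mI k g)) ⧸
    (Ideal.map (algebraMap (Rsub k g) (reesAlgebra (mI k g))) (mI k g))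

/-- The homogeneous maximal ideal `𝓜 = m/m² ⊕ m²/m³ ⊕ ⋯` of `G(m)`: the image
of the ideal of elements of the Rees algebra whose degree-0 coefficient lies
in `m`. -/
def MM : Ideal (grG k g) :=
  Ideal.map (Ideal.Quotient.mk _)
    (Ideal.comap ((Polynomial.evalRingHom (0 : Rsub k g)).comp
      (reesAlgebra (mI k g)).val.toRingHom) (mI k g))

/-- The reduction number `r` of `m`: the least `r` with `m^{r+1} = t^{g_1}·m^r`. -/
def rnum : ℕ :=
  sInf {j | (mI k g) ^ (j + 1) = Ideal.span {tR k g (g 0)} * (mI k g) ^ j}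

/-- The initial form `t^s*` of `t^s` in `G(m)`, i.e. the image of `t^s` in
`m^{ord(s)}/m^{ord(s)+1}` (the degree-`ord(s)` component of `G(m)`). -/
def tstar (s : ℕ) : grG k g :=
  Ideal.Quotient.mk _
    ⟨(Polynomial.monomial (ordS g s)) (tR k g s),
      reesAlgebra.monomial_mem.mpr (tR_mem_pow k g s)⟩

/-- `(0 :_{G(m)} 𝓜^r) = H⁰_𝓜(G(m))`. -/
def annM : Ideal (grG k g) := Submodule.colon ⊥ ((MM k g ^ rnum k g : Ideal (grG k g)) : Set (grG k g))

/-- `(0 :_{G(m)} 𝓜)`. -/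
def ann1 : Ideal (grG k g) := Submodule.colon ⊥ (MM k g : Set (grG k g))

/-- `G(m)` is Buchsbaum iff `(0 :_{G(m)} 𝓜) = (0 :_{G(m)} 𝓜^r)`. -/
def IsBuchsbaum : Prop := ann1 k g = annM k g

/-- `G(m)` is Cohen-Macaulay iff `(0 :_{G(m)} 𝓜^r) = 0`. -/
def IsCM : Prop := annM k g = ⊥

/-- `l_i = max { l | t^{ω_i + l g_1}* ∈ (0 :_{G(m)} 𝓜^r) }`. -/
def lℓ (i : ℕ) : ℕ := sSup {l | tstar k g (ap g i + l * g 0) ∈ annM k g}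

/-- The length of a `G(m)`-module: the Krull dimension of its lattice of
submodules, i.e. the longest length of a chain of submodules. -/
def lenOf (M : Type*) [AddCommGroup M] [Module (grG k g) M] : WithBot ℕ∞ :=
  Order.krullDim (Submodule (grG k g) M)

/-- The socle `(0 :_{G/ξG} 𝓜) = ((ξ) :_G 𝓜)/(ξ)` of `G(m)/ξ·G(m)`, where
`ξ = t^{g_1}*` is the canonical degree-one homogeneous parameter of `G(m)`. -/
abbrev socQ : Type _ :=
  ↥(Submodule.colon (Ideal.span {tstar k g (g 0)}) (MM k g)) ⧸
    (Submodule.comap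
      (Submodule.colon (Ideal.span {tstar k g (g 0)}) (MM k g)).subtype
      (Ideal.span {tstar k g (g 0)}))

/-- `G(m)` is Gorenstein: Cohen-Macaulay of type 1, i.e. Cohen-Macaulay and
the socle of `G(m)` modulo the homogeneous parameter `ξ = t^{g_1}*` has
length 1 as a `G(m)`-module. -/
def IsGor : Prop := IsCM k g ∧ lenOf k g (socQ k g) = 1


/-!
For `u ∈ S` write `d = ord u`. In `G(m)` the element `t^u*` is annihilated by `𝓜^r` exactly when
`u - (d + 1) g_1 ∈ S'`: multiplying by `(t^{g_1}*)^r` gives one direction, and the other follows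
because for `h ≥ r` the reduction number makes membership `v ∈ hM` equivalent to
`v - h g_1 ∈ S'`. For `u = ω_i + l g_1 = ω'_i + (a_i + l) g_1` the condition becomes
`ord(ω_i + l g_1) < a_i + l`. Adding `g_1` raises the order by at least one, so the set of such
`l` is an initial segment of `ℕ`; it contains `0` because `b_i < a_i`, hence it contains every
`l ≤ l_i`.
-/

theorem _root_.IsLowerSet.mem_of_le_sSup_nat {s : Set ℕ} (hs : IsLowerSet s) (hne : s.Nonempty)
    {l : ℕ} (hl : l ≤ sSup s) : l ∈ s := by
  by_cases hb : BddAbove s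
  · exact hs hl (Nat.sSup_mem hne hb)
  · obtain ⟨m, hm, hlm⟩ := not_bddAbove_iff.mp hb l
    exact hs hlm.le hm

theorem _root_.AddSubmonoid.nat_mul_mem {M : AddSubmonoid ℕ} {x : ℕ} (hx : x ∈ M) (m : ℕ) :
    m * x ∈ M :=
  smul_eq_mul m x ▸ AddSubmonoid.nsmul_mem _ hx m

theorem _root_.Ideal.exists_mk_eq_of_mem_map_mk_pow {A : Type*} [CommRing A] {I J : Ideal A}
    {r : ℕ} {p : A ⧸ I} (hp : p ∈ J.map (Ideal.Quotient.mk I) ^ r) :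
    ∃ f ∈ J ^ r, Ideal.Quotient.mk I f = p := by
  rw [← Ideal.map_pow] at hp
  exact (Ideal.mem_map_iff_of_surjective _ Ideal.Quotient.mk_surjective).mp hp

section ReesAlgebra

variable {R : Type*} [CommRing R] (I : Ideal R)

theorem coeff_mul_mem_pow {x y : R[X]} {F G H : ℕ → ℕ} (hx : ∀ p, x.coeff p ∈ I ^ F p)
    (hy : ∀ q, y.coeff q ∈ I ^ G q) (hH : ∀ p q, H (p + q) ≤ F p + G q) (e : ℕ) :
    (x * y).coeff e ∈ I ^ H e := by
  rw [coeff_mul]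
  refine Ideal.sum_mem _ fun pq hpq => ?_
  rw [← Finset.HasAntidiagonal.mem_antidiagonal.mp hpq]
  exact Ideal.pow_le_pow_right (hH _ _) (pow_add I _ _ ▸ Ideal.mul_mem_mul (hx _) (hy _))

def reesCoeffIdeal (F : ℕ → ℕ) (hF : ∀ p q, F (p + q) ≤ p + F q) :
    Ideal (reesAlgebra I) where
  carrier := {f | ∀ e, (f : R[X]).coeff e ∈ I ^ F e}
  zero_mem' _ := by simp
  add_mem' ha hb e := by simpa using add_mem (ha e) (hb e)
  smul_mem' r _ hf := coeff_mul_mem_pow I ((mem_reesAlgebra_iff I _).mp r.2) hf hF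

theorem reesCoeffIdeal_mul_le {F G H : ℕ → ℕ} (hF : ∀ p q, F (p + q) ≤ p + F q)
    (hG : ∀ p q, G (p + q) ≤ p + G q) (hH : ∀ p q, H (p + q) ≤ p + H q)
    (hFGH : ∀ p q, H (p + q) ≤ F p + G q) :
    reesCoeffIdeal I F hF * reesCoeffIdeal I G hG ≤ reesCoeffIdeal I H hH :=
  Submodule.mul_le.mpr fun _ hx _ hy => coeff_mul_mem_pow I hx hy hFGH

theorem monomial_mem_map_algebraMap {e : ℕ} {c : R} (hc : c ∈ I ^ (e + 1))
    (h : monomial e c ∈ reesAlgebra I) :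
    (⟨monomial e c, h⟩ : reesAlgebra I) ∈ I.map (algebraMap R (reesAlgebra I)) := by
  rw [pow_succ'] at hc
  induction hc using Submodule.mul_induction_on' with
  | mem_mul_mem a ha b hb =>
    have hb' : monomial e b ∈ reesAlgebra I := reesAlgebra.monomial_mem.mpr hb
    convert Ideal.mul_mem_right (⟨monomial e b, hb'⟩ : reesAlgebra I) _
      (Ideal.mem_map_of_mem (algebraMap R _) ha) using 1
    ext1
    simp [C_mul_monomial]
  | add x hx y hy ihx ihy =>
    have hx' := reesAlgebra.monomial_mem.mpr (Ideal.mul_le_right hx)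
    have hy' := reesAlgebra.monomial_mem.mpr (Ideal.mul_le_right hy)
    convert add_mem (ihx hx') (ihy hy') using 1
    ext1
    simp

theorem mem_map_algebraMap_reesAlgebra_iff {f : reesAlgebra I} :
    f ∈ I.map (algebraMap R (reesAlgebra I)) ↔ ∀ e, (f : R[X]).coeff e ∈ I ^ (e + 1) := by
  constructor
  · refine fun hf => ((Ideal.map_le_iff_le_comap.mpr fun a ha e => ?_) hf :
      f ∈ reesCoeffIdeal I (· + 1) fun p q => by omega)
    rcases e with _ | e <;> simp [coeff_C, ha]
  · intro hf
    have hsum : f = ∑ e ∈ Finset.range ((f : R[X]).natDegree + 1),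
        ⟨monomial e ((f : R[X]).coeff e), reesAlgebra.monomial_mem.mpr
          ((mem_reesAlgebra_iff I _).mp f.2 e)⟩ := by
      ext1
      simpa using (f : R[X]).as_sum_range' _ (Nat.lt_succ_self _)
    rw [hsum]
    exact Ideal.sum_mem _ fun e _ => monomial_mem_map_algebraMap I (hf e) _

theorem pow_comap_evalRingHom_le (j : ℕ) :
    Ideal.comap ((evalRingHom 0).comp (reesAlgebra I).val.toRingHom) I ^ j ≤
      reesCoeffIdeal I (max · j) (fun p q => by omega) := by
  induction j with
  | zero =>
    intro f _ e
    simpa using (mem_reesAlgebra_iff I _).mp f.2 e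
  | succ j ih =>
    rw [pow_succ]
    refine (Ideal.mul_mono ih ?_).trans
      (reesCoeffIdeal_mul_le I _ (G := (max · 1)) (fun p q => by omega) _ fun p q => by omega)
    intro f hf e
    rcases e with _ | e
    · simpa [coeff_zero_eq_eval_zero] using hf
    · simpa using (mem_reesAlgebra_iff I _).mp f.2 (e + 1)

end ReesAlgebra

section Sumsets

variable {n : ℕ} {g : Fin (n + 1) → ℕ}

theorem g_mem_S (j : Fin (n + 1)) : g j ∈ S g :=
  AddSubmonoid.subset_closure ⟨j, rfl⟩

theorem MinGen.g_zero_ne_zero (hg : MinGen g) : g 0 ≠ 0 := fun h =>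
  hg.minimal 0 (by rw [h]; exact zero_mem _)

theorem MinGen.g_zero_le (hg : MinGen g) (j : Fin (n + 1)) : g 0 ≤ g j :=
  hg.smono.monotone (Fin.zero_le j)

theorem MinGen.g_ne_zero (hg : MinGen g) (j : Fin (n + 1)) : g j ≠ 0 := by
  have := hg.g_zero_le j
  have := hg.g_zero_ne_zero
  omega

theorem exists_eq_g_add_of_mem_S {x : ℕ} (hx : x ∈ S g) (hx0 : x ≠ 0) :
    ∃ j, ∃ y ∈ S g, x = g j + y := by
  induction hx using AddSubmonoid.closure_induction with
  | mem _ hy =>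
    obtain ⟨j, rfl⟩ := hy
    exact ⟨j, 0, zero_mem _, rfl⟩
  | zero => exact absurd rfl hx0
  | add x y hx hy ihx ihy =>
    rcases eq_or_ne x 0 with rfl | hx0'
    · simpa using ihy (by simpa using hx0)
    · obtain ⟨j, z, hz, rfl⟩ := ihx hx0'
      exact ⟨j, z + y, add_mem hz hy, by ring⟩

theorem add_mem_setM_of_mem_S {h x s : ℕ} (hx : x ∈ setM g h) (hs : s ∈ S g) :
    x + s ∈ setM g h := by
  induction h generalizing x with
  | zero => exact add_mem hx hs
  | succ h ih =>
    obtain ⟨u, hu, v, hv, rfl⟩ := Set.mem_add.mp hx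
    exact add_assoc u v s ▸ Set.add_mem_add hu (ih hv)

theorem add_mem_setM {a b x y : ℕ} (hx : x ∈ setM g a) (hy : y ∈ setM g b) :
    x + y ∈ setM g (a + b) := by
  induction a generalizing x with
  | zero => simpa [add_comm x] using add_mem_setM_of_mem_S hy hx
  | succ a ih =>
    obtain ⟨u, hu, v, hv, rfl⟩ := Set.mem_add.mp hx
    rw [show a + 1 + b = a + b + 1 by omega, show u + v + y = u + (v + y) by ring]
    exact Set.add_mem_add hu (ih hv)

theorem setM_antitone : Antitone (setM g) := by
  refine antitone_nat_of_succ_le fun h x hx => ?_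
  obtain ⟨u, hu, v, hv, rfl⟩ := Set.mem_add.mp hx
  exact add_comm v u ▸ add_mem_setM_of_mem_S hv hu.1

theorem mem_setM_succ_iff (hg : MinGen g) {h x : ℕ} :
    x ∈ setM g (h + 1) ↔ ∃ j, ∃ y ∈ setM g h, x = g j + y := by
  constructor
  · intro hx
    obtain ⟨u, hu, v, hv, rfl⟩ := Set.mem_add.mp hx
    obtain ⟨j, w, hw, rfl⟩ := exists_eq_g_add_of_mem_S hu.1 hu.2
    exact ⟨j, v + w, add_mem_setM_of_mem_S hv hw, by ring⟩
  · rintro ⟨j, y, hy, rfl⟩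
    exact Set.add_mem_add ⟨g_mem_S j, hg.g_ne_zero j⟩ hy

theorem mul_g_mem_setM (hg : MinGen g) (m : ℕ) (j : Fin (n + 1)) : m * g j ∈ setM g m := by
  induction m with
  | zero => rw [zero_mul]; exact zero_mem (S g)
  | succ m ih => exact (mem_setM_succ_iff hg).mpr ⟨j, _, ih, by ring⟩

theorem le_ordS_of_mem_setM {h x : ℕ} (hx : x ∈ setM g h) : h ≤ ordS g x :=
  le_csSup ⟨x, fun h' hh' => le_of_mem_setM g h' x hh'⟩ hx

theorem ordS_add_le_ordS_add_mul (hg : MinGen g) {x : ℕ} (hx : x ∈ S g) (m : ℕ)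
    (j : Fin (n + 1)) : ordS g x + m ≤ ordS g (x + m * g j) :=
  le_ordS_of_mem_setM (add_mem_setM (mem_setM_ordS g hx) (mul_g_mem_setM hg m j))

theorem isLowerSet_ordS_add_mul_lt (hg : MinGen g) {x : ℕ} (hx : x ∈ S g) (a : ℕ) :
    IsLowerSet {m | ordS g (x + m * g 0) < a + m} := by
  intro m l hlm (hm : ordS g (x + m * g 0) < a + m)
  show ordS g (x + l * g 0) < a + l
  have := ordS_add_le_ordS_add_mul hg (add_mem hx (AddSubmonoid.nat_mul_mem (g_mem_S 0) l))
    (m - l) 0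
  rw [add_assoc, ← add_mul, Nat.add_sub_cancel' hlm] at this
  omega

theorem sum_mem_setM (hg : MinGen g) (s : Finset (Fin (n + 1))) (c : Fin (n + 1) → ℕ) :
    ∑ j ∈ s, c j * g j ∈ setM g (∑ j ∈ s, c j) := by
  induction s using Finset.induction_on with
  | empty => exact zero_mem (S g)
  | insert j s hj ih =>
    rw [Finset.sum_insert hj, Finset.sum_insert hj]
    exact add_mem_setM (mul_g_mem_setM hg _ _) ih

theorem exists_sum_of_mem_setM (hg : MinGen g) {h x : ℕ} (hx : x ∈ setM g h) :
    ∃ c : Fin (n + 1) → ℕ, h ≤ ∑ j, c j ∧ x = ∑ j, c j * g j := by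
  induction h generalizing x with
  | zero =>
    obtain ⟨c, rfl⟩ := AddSubmonoid.mem_closure_range_iff_of_fintype.mp hx
    exact ⟨c, Nat.zero_le _, by simp⟩
  | succ h ih =>
    obtain ⟨j, y, hy, rfl⟩ := (mem_setM_succ_iff hg).mp hx
    obtain ⟨c, hc, rfl⟩ := ih hy
    refine ⟨c + Pi.single j 1, ?_, ?_⟩ <;>
      simp [Finset.sum_add_distrib, add_mul, Pi.single_apply] <;> omega

/-- Pigeonhole: one generator occurs at least `g 0` times, and `g 0` copies of `g j` can be
traded for `g j` copies of `g 0`. -/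
theorem sub_g_zero_mem_setM_of_le (hg : MinGen g) {N x : ℕ} (hN : (n + 1) * g 0 ≤ N)
    (hx : x ∈ setM g (N + 1)) : g 0 ≤ x ∧ x - g 0 ∈ setM g N := by
  obtain ⟨c, hc, rfl⟩ := exists_sum_of_mem_setM hg hx
  obtain ⟨j, hj⟩ : ∃ j, g 0 ≤ c j := by
    by_contra! hlt
    have := Finset.sum_le_card_nsmul Finset.univ (fun j => c j) (g 0 - 1) fun j _ => by
      have := hlt j; omega
    simp only [Finset.card_univ, Fintype.card_fin, smul_eq_mul] at this
    have := Nat.mul_le_mul_left (n + 1) (Nat.sub_le (g 0) 1)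
    omega
  obtain ⟨t, ht⟩ := Nat.exists_eq_add_of_le hj
  obtain ⟨s, hs⟩ := Nat.exists_eq_add_of_le (Nat.one_le_iff_ne_zero.mpr (hg.g_ne_zero j))
  have hrest := sum_mem_setM hg (Finset.univ.erase j) c
  rw [← Finset.add_sum_erase _ _ (Finset.mem_univ j)] at hc ⊢
  have hsplit : c j * g j - g 0 = t * g j + s * g 0 := by
    rw [ht, hs]; ring_nf; omega
  have hle : g 0 ≤ c j * g j := hj.trans (Nat.le_mul_of_pos_right _ (by omega))
  refine ⟨by omega, ?_⟩
  rw [Nat.sub_add_comm hle, hsplit]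
  refine setM_antitone ?_ (add_mem_setM (add_mem_setM (mul_g_mem_setM hg t j)
    (mul_g_mem_setM hg s 0)) hrest)
  have := hg.g_zero_le j
  omega

end Sumsets

section BlowUp

variable {n : ℕ} {g : Fin (n + 1) → ℕ}

theorem g_zero_mem_S' : g 0 ∈ S' g :=
  AddSubmonoid.subset_closure (Set.mem_insert _ _)

theorem g_sub_g_zero_mem_S' (j : Fin (n + 1)) : g j - g 0 ∈ S' g :=
  AddSubmonoid.subset_closure (Set.mem_insert_of_mem _ ⟨j, rfl⟩)

theorem S_le_S' (hg : MinGen g) : S g ≤ S' g := by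
  refine AddSubmonoid.closure_le.mpr ?_
  rintro _ ⟨j, rfl⟩
  exact Nat.sub_add_cancel (hg.g_zero_le j) ▸ add_mem (g_sub_g_zero_mem_S' j) g_zero_mem_S'

theorem sub_mem_S'_of_mem_setM (hg : MinGen g) {h x : ℕ} (hx : x ∈ setM g h) :
    h * g 0 ≤ x ∧ x - h * g 0 ∈ S' g := by
  induction h generalizing x with
  | zero => simpa using S_le_S' hg hx
  | succ h ih =>
    obtain ⟨j, y, hy, rfl⟩ := (mem_setM_succ_iff hg).mp hx
    obtain ⟨hle, hy'⟩ := ih hy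
    have := hg.g_zero_le j
    rw [add_one_mul]
    refine ⟨by omega, ?_⟩
    rw [show g j + y - (h * g 0 + g 0) = g j - g 0 + (y - h * g 0) by omega]
    exact add_mem (g_sub_g_zero_mem_S' j) hy'

theorem exists_add_mul_mem_setM_of_mem_S' (hg : MinGen g) {y : ℕ} (hy : y ∈ S' g) :
    ∃ C, ∀ h, C ≤ h → y + h * g 0 ∈ setM g h := by
  induction hy using AddSubmonoid.closure_induction with
  | mem z hz =>
    rcases hz with rfl | ⟨j, rfl⟩
    · refine ⟨0, fun h _ => setM_antitone (Nat.le_succ h) ?_⟩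
      simpa [add_one_mul, add_comm] using mul_g_mem_setM hg (h + 1) 0
    · refine ⟨1, fun h hh => ?_⟩
      obtain ⟨h, rfl⟩ := Nat.exists_eq_add_of_le' hh
      have := hg.g_zero_le j
      rw [show g j - g 0 + (h + 1) * g 0 = g j + h * g 0 by rw [add_one_mul]; omega]
      exact (mem_setM_succ_iff hg).mpr ⟨j, _, mul_g_mem_setM hg h 0, rfl⟩
  | zero => exact ⟨0, fun h _ => by simpa using mul_g_mem_setM hg h 0⟩
  | add y z _ _ ihy ihz =>
    obtain ⟨C, hC⟩ := ihy
    obtain ⟨D, hD⟩ := ihz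
    refine ⟨C + D, fun h hh => ?_⟩
    obtain ⟨h, rfl⟩ := Nat.exists_eq_add_of_le (le_of_add_le_left hh)
    convert add_mem_setM (hC C le_rfl) (hD h (by omega)) using 1
    ring

end BlowUp

section SemigroupRing

variable {n : ℕ} {g : Fin (n + 1) → ℕ} (k : Type*) [Field k]

theorem coe_tR {s : ℕ} (hs : s ∈ S g) : (tR k g s : PowerSeries k) = PowerSeries.X ^ s := by
  simp [tR, hs, PowerSeries.X_pow_eq]

theorem tR_zero : tR k g 0 = 1 :=
  Subtype.ext (by simp [coe_tR k (zero_mem (S g))])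

theorem tR_pow {s : ℕ} (hs : s ∈ S g) (m : ℕ) : tR k g s ^ m = tR k g (m * s) :=
  Subtype.ext (by
    rw [SubmonoidClass.coe_pow, coe_tR k hs, coe_tR k (AddSubmonoid.nat_mul_mem hs m), ← pow_mul,
      mul_comm])

theorem mI_pow_eq_span (hg : MinGen g) (q : ℕ) :
    mI k g ^ q = Ideal.span (tR k g '' setM g q) := by
  induction q with
  | zero =>
    rw [pow_zero, Ideal.one_eq_top, eq_comm, Ideal.eq_top_iff_one]
    exact Ideal.subset_span ⟨0, zero_mem (S g), tR_zero k⟩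
  | succ q ih =>
    rw [pow_succ', ih, mI, Ideal.span_mul_span']
    congr 1
    ext x
    constructor
    · rintro ⟨_, ⟨j, rfl⟩, _, ⟨y, hy, rfl⟩, rfl⟩
      exact ⟨g j + y, (mem_setM_succ_iff hg).mpr ⟨j, y, hy, rfl⟩,
        tR_mul k g (g_mem_S j) (setM_subset g q hy)⟩
    · rintro ⟨v, hv, rfl⟩
      obtain ⟨j, y, hy, rfl⟩ := (mem_setM_succ_iff hg).mp hv
      exact ⟨_, ⟨j, rfl⟩, _, ⟨y, hy, rfl⟩,
        (tR_mul k g (g_mem_S j) (setM_subset g q hy)).symm⟩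

theorem mem_setM_of_coeff_ne_zero (hg : MinGen g) {N x : ℕ} {f : Rsub k g}
    (hf : f ∈ mI k g ^ N) (hx : PowerSeries.coeff x (f : PowerSeries k) ≠ 0) :
    x ∈ setM g N := by
  rw [mI_pow_eq_span k hg] at hf
  induction hf using Submodule.span_induction generalizing x with
  | mem f hf =>
    obtain ⟨v, hv, rfl⟩ := hf
    rw [coe_tR k (setM_subset g N hv), PowerSeries.coeff_X_pow] at hx
    split_ifs at hx with h
    · rwa [h]
    · exact absurd rfl hx
  | zero => simp at hx
  | add f f' _ _ ihf ihf' =>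
    by_cases h : PowerSeries.coeff x (f : PowerSeries k) = 0
    · exact ihf' (by simpa [h] using hx)
    · exact ihf h
  | smul r f _ ih =>
    have hx' : PowerSeries.coeff x ((r : PowerSeries k) * (f : PowerSeries k)) ≠ 0 := hx
    rw [PowerSeries.coeff_mul] at hx'
    obtain ⟨p, hp, hne⟩ := Finset.exists_ne_zero_of_sum_ne_zero hx'
    rw [← Finset.HasAntidiagonal.mem_antidiagonal.mp hp, add_comm]
    exact add_mem_setM_of_mem_S (ih (right_ne_zero_of_mul hne)) (r.2 _ (left_ne_zero_of_mul hne))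

theorem tR_mem_pow_iff (hg : MinGen g) {N x : ℕ} (hx : x ∈ S g) :
    tR k g x ∈ mI k g ^ N ↔ x ∈ setM g N :=
  ⟨fun h => mem_setM_of_coeff_ne_zero k hg h (by simp [coe_tR k hx]),
    tR_mem_pow_of_setM k g N x⟩

theorem tR_mul_mem_pow (hg : MinGen g) {q u N : ℕ} (hu : u ∈ S g)
    (h : ∀ v ∈ setM g q, u + v ∈ setM g N) {f : Rsub k g} (hf : f ∈ mI k g ^ q) :
    tR k g u * f ∈ mI k g ^ N := by
  rw [mI_pow_eq_span k hg] at hf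
  suffices Ideal.span (tR k g '' setM g q) ≤ (mI k g ^ N).colon {tR k g u} by
    simpa [mul_comm] using Submodule.mem_colon_singleton.mp (this hf)
  refine Ideal.span_le.mpr ?_
  rintro _ ⟨v, hv, rfl⟩
  rw [SetLike.mem_coe, Submodule.mem_colon_singleton, smul_eq_mul, mul_comm,
    ← tR_mul k g hu (setM_subset g q hv)]
  exact tR_mem_pow_of_setM k g N _ (h v hv)

theorem mI_pow_succ_eq_of_le (hg : MinGen g) {N : ℕ} (hN : (n + 1) * g 0 ≤ N) :
    mI k g ^ (N + 1) = Ideal.span {tR k g (g 0)} * mI k g ^ N := by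
  refine le_antisymm ?_ (pow_succ' (mI k g) N ▸ Ideal.mul_mono_left ?_)
  · rw [mI_pow_eq_span k hg (N + 1), Ideal.span_le]
    rintro _ ⟨v, hv, rfl⟩
    obtain ⟨hle, hv'⟩ := sub_g_zero_mem_setM_of_le hg hN hv
    rw [← Nat.add_sub_cancel' hle, tR_mul k g (g_mem_S 0) (setM_subset g N hv')]
    exact Ideal.mul_mem_mul (Ideal.mem_span_singleton_self _) (tR_mem_pow_of_setM k g N _ hv')
  · exact Ideal.span_le.mpr (Set.singleton_subset_iff.mpr (Ideal.subset_span ⟨0, rfl⟩))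

theorem mI_pow_rnum_succ (hg : MinGen g) :
    mI k g ^ (rnum k g + 1) = Ideal.span {tR k g (g 0)} * mI k g ^ rnum k g :=
  Nat.sInf_mem (s := {j | mI k g ^ (j + 1) = Ideal.span {tR k g (g 0)} * mI k g ^ j})
    ⟨_, mI_pow_succ_eq_of_le k hg le_rfl⟩

theorem sub_g_zero_mem_setM_of_rnum_le (hg : MinGen g) {N x : ℕ} (hN : rnum k g ≤ N)
    (hx : x ∈ setM g (N + 1)) : g 0 ≤ x ∧ x - g 0 ∈ setM g N := by
  induction N, hN using Nat.le_induction generalizing x with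
  | base =>
    have hxS := setM_subset g _ hx
    rw [← tR_mem_pow_iff k hg hxS, mI_pow_rnum_succ k hg, Ideal.mem_span_singleton_mul] at hx
    obtain ⟨c, hc, hcx⟩ := hx
    have hcoeff := congrArg (fun f : Rsub k g => PowerSeries.coeff x (f : PowerSeries k)) hcx
    simp only [MulMemClass.coe_mul, coe_tR k (g_mem_S 0), coe_tR k hxS,
      PowerSeries.coeff_X_pow_mul', PowerSeries.coeff_X_pow_self] at hcoeff
    split_ifs at hcoeff with hle
    · exact ⟨hle, mem_setM_of_coeff_ne_zero k hg hc (hcoeff ▸ one_ne_zero)⟩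
    · exact absurd hcoeff zero_ne_one
  | succ N hN ih =>
    obtain ⟨j, y, hy, rfl⟩ := (mem_setM_succ_iff hg).mp hx
    obtain ⟨hle, hy'⟩ := ih hy
    refine ⟨le_add_left hle, ?_⟩
    rw [Nat.add_sub_assoc hle]
    exact (mem_setM_succ_iff hg).mpr ⟨j, _, hy', rfl⟩

theorem mem_setM_of_add_mul_mem_setM (hg : MinGen g) {h x : ℕ} (hr : rnum k g ≤ h) (m : ℕ)
    (hx : x + m * g 0 ∈ setM g (h + m)) : x ∈ setM g h := by
  induction m with
  | zero => simpa using hx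
  | succ m ih =>
    refine ih ?_
    rw [← add_assoc] at hx
    have := (sub_g_zero_mem_setM_of_rnum_le k hg (by omega) hx).2
    rwa [add_one_mul, ← add_assoc, Nat.add_sub_cancel] at this

theorem mem_setM_iff_of_rnum_le (hg : MinGen g) {h x : ℕ} (hr : rnum k g ≤ h) :
    x ∈ setM g h ↔ h * g 0 ≤ x ∧ x - h * g 0 ∈ S' g := by
  refine ⟨sub_mem_S'_of_mem_setM hg, fun ⟨hle, hx⟩ => ?_⟩
  obtain ⟨C, hC⟩ := exists_add_mul_mem_setM_of_mem_S' hg hx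
  refine mem_setM_of_add_mul_mem_setM k hg hr C ?_
  convert hC (h + C) le_add_self using 1
  rw [add_mul, ← add_assoc, Nat.sub_add_cancel hle]

end SemigroupRing

section Apery

variable {n : ℕ} {g : Fin (n + 1) → ℕ}

theorem MinGen.exists_int_sum_eq_one (hg : MinGen g) :
    ∃ c : Fin (n + 1) → ℤ, ∑ j, (g j : ℤ) * c j = 1 := by
  obtain ⟨c, hc⟩ := Finset.gcd_eq_sum_mul Finset.univ fun j => (g j : ℤ)
  refine ⟨c, hc ▸ ?_⟩
  have hdvd : (Finset.univ.gcd fun j => (g j : ℤ)).natAbs ∣ Finset.univ.gcd g :=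
    Finset.dvd_gcd fun j _ => Int.natAbs_dvd_natAbs.mpr (Finset.gcd_dvd (Finset.mem_univ j))
  rw [hg.gcdeq, Nat.dvd_one] at hdvd
  have := Finset.Int.finsetGcd_nonneg (s := Finset.univ) (f := fun j => (g j : ℤ))
  omega

theorem exists_mem_S_mod (hg : MinGen g) {i : ℕ} (hi : i < g 0) : ∃ s ∈ S g, s % g 0 = i := by
  obtain ⟨c, hc⟩ := hg.exists_int_sum_eq_one
  set s := ∑ j, (c j % g 0).toNat * g j
  have hs : (s : ZMod (g 0)) = 1 := by
    have hpos : (0 : ℤ) < g 0 := by have := hg.g_zero_ne_zero; omega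
    simp only [s, Nat.cast_sum, Nat.cast_mul]
    rw [← Int.cast_one, ← hc]
    push_cast
    refine Finset.sum_congr rfl fun j _ => ?_
    obtain ⟨m, hm⟩ := Int.eq_ofNat_of_zero_le (Int.emod_nonneg (c j) hpos.ne')
    rw [mul_comm, ← ZMod.intCast_mod (c j), hm]
    simp
  refine ⟨i * s, AddSubmonoid.nat_mul_mem
    (sum_mem fun j _ => AddSubmonoid.nat_mul_mem (g_mem_S j) _) i, ?_⟩
  conv_rhs => rw [← Nat.mod_eq_of_lt hi]
  rw [← ZMod.natCast_eq_natCast_iff', Nat.cast_mul, hs, mul_one]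

theorem ap_mem (hg : MinGen g) {i : ℕ} (hi : i < g 0) : ap g i ∈ S g ∧ ap g i % g 0 = i :=
  Nat.sInf_mem (exists_mem_S_mod hg hi)

theorem ap'_mem (hg : MinGen g) {i : ℕ} (hi : i < g 0) : ap' g i ∈ S' g ∧ ap' g i % g 0 = i :=
  Nat.sInf_mem (s := {s | s ∈ S' g ∧ s % g 0 = i})
    ⟨ap g i, S_le_S' hg (ap_mem hg hi).1, (ap_mem hg hi).2⟩

theorem ap_eq_ap'_add (hg : MinGen g) {i : ℕ} (hi : i < g 0) :
    ap g i = ap' g i + aa g i * g 0 := by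
  have hle : ap' g i ≤ ap g i := Nat.sInf_le ⟨S_le_S' hg (ap_mem hg hi).1, (ap_mem hg hi).2⟩
  have hdvd : g 0 ∣ ap g i - ap' g i :=
    (Nat.modEq_iff_dvd' hle).mp ((ap'_mem hg hi).2.trans (ap_mem hg hi).2.symm)
  rw [aa, Nat.div_mul_cancel hdvd]
  omega

/-- Within the residue class of `i`, the elements of `S'` are exactly those `≥ ω'_i`. -/
theorem sub_mem_S'_iff (hg : MinGen g) {i h x : ℕ} (hi : i < g 0) (hx : x % g 0 = i) :
    h * g 0 ≤ x ∧ x - h * g 0 ∈ S' g ↔ ap' g i + h * g 0 ≤ x := by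
  constructor
  · rintro ⟨hle, hmem⟩
    have : ap' g i ≤ x - h * g 0 :=
      Nat.sInf_le ⟨hmem, by rw [← hx, mul_comm, Nat.sub_mul_mod (mul_comm h _ ▸ hle)]⟩
    omega
  · intro hle
    refine ⟨by omega, ?_⟩
    have hdvd : g 0 ∣ x - h * g 0 - ap' g i := by
      refine (Nat.modEq_iff_dvd' (by omega)).mp ?_
      rw [Nat.ModEq, (ap'_mem hg hi).2, mul_comm, Nat.sub_mul_mod (by rw [mul_comm]; omega), hx]
    obtain ⟨m, hm⟩ := hdvd
    rw [show x - h * g 0 = ap' g i + m * g 0 by rw [mul_comm m, ← hm]; omega]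
    exact add_mem (ap'_mem hg hi).1 (AddSubmonoid.nat_mul_mem g_zero_mem_S' m)

end Apery

section AssociatedGraded

variable {n : ℕ} {g : Fin (n + 1) → ℕ} (k : Type*) [Field k]

theorem sub_mem_S'_of_tstar_mem_annM (hg : MinGen g) {u : ℕ} (hu : u ∈ S g)
    (h : tstar k g u ∈ annM k g) :
    (ordS g u + 1) * g 0 ≤ u ∧ u - (ordS g u + 1) * g 0 ∈ S' g := by
  set r := rnum k g
  have hg0 : tR k g (g 0) ∈ mI k g ^ 1 :=
    (pow_one (mI k g)).symm ▸ Ideal.subset_span ⟨0, rfl⟩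
  set ξ : reesAlgebra (mI k g) := ⟨monomial 1 (tR k g (g 0)), reesAlgebra.monomial_mem.mpr hg0⟩
  have hξ : Ideal.Quotient.mk _ (ξ ^ r) ∈ MM k g ^ r := by
    rw [map_pow]
    refine Ideal.pow_mem_pow (Ideal.mem_map_of_mem _ ?_) r
    simp [ξ]
  have hprod := Submodule.mem_colon.mp h _ hξ
  rw [tstar, smul_eq_mul, Submodule.mem_bot, ← map_mul, Ideal.Quotient.eq_zero_iff_mem,
    mem_map_algebraMap_reesAlgebra_iff] at hprod
  have hrg0 : r * g 0 ∈ S g := AddSubmonoid.nat_mul_mem (g_mem_S 0) r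
  have hcoeff := hprod (ordS g u + r)
  simp only [ξ, MulMemClass.coe_mul, SubmonoidClass.coe_pow, monomial_pow, monomial_mul_monomial,
    one_mul, tR_pow k (g_mem_S 0), ← tR_mul k g hu hrg0, coeff_monomial_same] at hcoeff
  obtain ⟨hle, hS'⟩ :=
    sub_mem_S'_of_mem_setM hg ((tR_mem_pow_iff k hg (add_mem hu hrg0)).mp hcoeff)
  have hsplit : (ordS g u + r + 1) * g 0 = (ordS g u + 1) * g 0 + r * g 0 := by ring
  rw [hsplit, Nat.add_sub_add_right] at hS'
  exact ⟨by omega, hS'⟩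

theorem tstar_mem_annM_of_sub_mem_S' (hg : MinGen g) {u : ℕ} (hu : u ∈ S g)
    (hle : (ordS g u + 1) * g 0 ≤ u) (hS' : u - (ordS g u + 1) * g 0 ∈ S' g) :
    tstar k g u ∈ annM k g := by
  set d := ordS g u
  refine Submodule.mem_colon.mpr fun p hp => ?_
  obtain ⟨f, hf, rfl⟩ := Ideal.exists_mk_eq_of_mem_map_mk_pow hp
  rw [tstar, smul_eq_mul, Submodule.mem_bot, ← map_mul, Ideal.Quotient.eq_zero_iff_mem,
    mem_map_algebraMap_reesAlgebra_iff]
  intro e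
  have hcoe : monomial d (tR k g u) * (f : (Rsub k g)[X]) = f.1 * X ^ d * C (tR k g u) := by
    rw [← C_mul_X_pow_eq_monomial]
    ring
  show (monomial d (tR k g u) * (f : (Rsub k g)[X])).coeff e ∈ _
  rw [hcoe, coeff_mul_C, coeff_mul_X_pow']
  split_ifs with hde
  · set q := max (e - d) (rnum k g)
    have hf' : (f : (Rsub k g)[X]).coeff (e - d) ∈ mI k g ^ q :=
      pow_comap_evalRingHom_le (mI k g) (rnum k g) hf (e - d)
    refine Ideal.pow_le_pow_right (show e + 1 ≤ d + q + 1 by omega) ?_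
    rw [mul_comm]
    refine tR_mul_mem_pow k hg hu (fun v hv => ?_) hf'
    obtain ⟨hvle, hv'⟩ := sub_mem_S'_of_mem_setM hg hv
    refine (mem_setM_iff_of_rnum_le k hg (by omega)).mpr ?_
    have hsplit : (d + q + 1) * g 0 = (d + 1) * g 0 + q * g 0 := by ring
    rw [hsplit, show u + v - ((d + 1) * g 0 + q * g 0) = u - (d + 1) * g 0 + (v - q * g 0) by
      omega]
    exact ⟨by omega, add_mem hS' hv'⟩
  · rw [zero_mul]
    exact zero_mem _

theorem tstar_mem_annM_iff (hg : MinGen g) {u : ℕ} (hu : u ∈ S g) :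
    tstar k g u ∈ annM k g ↔
      (ordS g u + 1) * g 0 ≤ u ∧ u - (ordS g u + 1) * g 0 ∈ S' g :=
  ⟨sub_mem_S'_of_tstar_mem_annM k hg hu, fun h => tstar_mem_annM_of_sub_mem_S' k hg hu h.1 h.2⟩

theorem tstar_ap_add_mem_annM_iff (hg : MinGen g) {i : ℕ} (hi : i < g 0) (m : ℕ) :
    tstar k g (ap g i + m * g 0) ∈ annM k g ↔ ordS g (ap g i + m * g 0) < aa g i + m := by
  have hmem := ap_mem hg hi
  rw [tstar_mem_annM_iff k hg (add_mem hmem.1 (AddSubmonoid.nat_mul_mem (g_mem_S 0) m)),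
    sub_mem_S'_iff hg hi (by rw [Nat.add_mul_mod_self_right, hmem.2]), ap_eq_ap'_add hg hi,
    add_assoc, add_le_add_iff_left, ← add_mul, Nat.mul_le_mul_right_iff
      (Nat.pos_of_ne_zero hg.g_zero_ne_zero)]
  omega

end AssociatedGraded

theorem statement0_general {k : Type*} [Field k] {n : ℕ} (g : Fin (n + 1) → ℕ)
    (hg : MinGen g) (i : ℕ) (hi : i < g 0) (hab : bb g i < aa g i)
    (l : ℕ) (hl : l ≤ lℓ k g i) :
    tstar k g (ap g i + l * g 0) ∈ annM k g := by
  have hlower : IsLowerSet {l | tstar k g (ap g i + l * g 0) ∈ annM k g} := by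
    simpa only [tstar_ap_add_mem_annM_iff k hg hi] using
      isLowerSet_ordS_add_mul_lt hg (ap_mem hg hi).1 (aa g i)
  refine hlower.mem_of_le_sSup_nat ⟨0, (tstar_ap_add_mem_annM_iff k hg hi 0).mpr ?_⟩ hl
  simpa [bb] using hab

/-- Lemma 2a. Let `i` be an index with `a_i > b_i` and let
`l_i = max { l | t^{ω_i + l g_1}* ∈ (0 :_{G(m)} 𝓜^r) }`. Then
`t^{ω_i + l g_1}* ∈ (0 :_{G(m)} 𝓜^r)` for every `l = 0, 1, …, l_i`. -/
theorem statement0 {k : Type*} [Field k] [Infinite k] {n : ℕ} (g : Fin (n + 1) → ℕ)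
    (hg : MinGen g) (i : ℕ) (hi : i < g 0) (hab : bb g i < aa g i)
    (l : ℕ) (hl : l ≤ lℓ k g i) :
    tstar k g (ap g i + l * g 0) ∈ annM k g :=
  statement0_general g hg i hi hab l hl

end NumSgrp
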